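/- arXiv:2012.00707 — 2 statements merged into one kernel-verified Lean document; each statement's English description precedes it below -/
import Mathlib

section
/- If a measure space (X, M, μ) and a measurable function f satisfy ‖f‖_{B_{p,q₀}} < ∞ for some p ≥ 1 and q₀ > 0, where B_{p,q}(t) = t^p·log(e-1+t)^q is the Young function defining the Luxemburg norm, then lim_{q→∞} ‖f‖_{B_{p,q}} = ‖f‖_∞. -/
/-!
For `q ≥ 0` the integrand `B_{p,q}(|f|/c)` is monotone in `|f|/c`, and the factor
`log (e₀ + s) ^ q` decides everything: it tends to `∞` where `s > 1` and to `0` where `s < 1`,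
since `log (e₀ + 1) = 1`. If `c < ‖f‖_∞`, then `|f|/c` exceeds some `ρ > 1` on a set of positive
measure, so `∫ B_{p,q}(|f|/c) → ∞` and eventually `c ≤ ‖f‖_{B_{p,q}}`. If `‖f‖_∞ < c`, then
`|f|/c ≤ θ < 1` a.e., so `B_{p,q}(|f|/c) ≤ log (e₀ + θ) ^ q (|f|/c)^p`; the hypothesis
`‖f‖_{B_{p,q₀}} < ∞` makes `∫ (|f|/c)^p` finite, hence `∫ B_{p,q}(|f|/c) → 0` and eventually
`‖f‖_{B_{p,q}} ≤ c`.
-/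

open MeasureTheory Filter Real Topology ENNReal

noncomputable def e0 : ℝ := Real.exp 1 - 1

noncomputable def Bpq (p q t : ℝ) : ℝ := t ^ p * (Real.log (e0 + t)) ^ q

noncomputable def BpqBar (p q t : ℝ) : ℝ := t ^ p * (Real.log (Real.exp 1 + t)) ^ q

/-- The Luxemburg norm of `f` with respect to the Young function `A`. -/
noncomputable def luxNorm {X : Type*} [MeasurableSpace X] (μ : Measure X)
    (A : ℝ → ℝ) (f : X → ℝ) : ℝ≥0∞ :=
  sInf {lam : ℝ≥0∞ | 0 < lam ∧ lam ≠ ∞ ∧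
    ∫⁻ x, ENNReal.ofReal (A (|f x| / lam.toReal)) ∂μ ≤ 1}

/-- `A` is a Young function: continuous, convex, increasing on `[0,∞)`,
`A 0 = 0` and `A t / t → ∞`. -/
def IsYoung (A : ℝ → ℝ) : Prop :=
  ContinuousOn A (Set.Ici 0) ∧ ConvexOn ℝ (Set.Ici 0) A ∧ MonotoneOn A (Set.Ici 0) ∧
    A 0 = 0 ∧ Tendsto (fun t => A t / t) atTop atTop

section Luxemburg

variable {X : Type*} [MeasurableSpace X] {μ : Measure X} {A : ℝ → ℝ} {f : X → ℝ} {c : ℝ}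

lemma exists_lintegral_le_one_of_luxNorm_lt_top (h : luxNorm μ A f < ∞) :
    ∃ c : ℝ, 0 < c ∧ ∫⁻ x, ENNReal.ofReal (A (|f x| / c)) ∂μ ≤ 1 := by
  obtain ⟨lam, ⟨hlam0, hlam, hint⟩, -⟩ := sInf_lt_iff.1 h
  exact ⟨lam.toReal, ENNReal.toReal_pos hlam0.ne' hlam, hint⟩

lemma luxNorm_le_ofReal (hc : 0 < c) (h : ∫⁻ x, ENNReal.ofReal (A (|f x| / c)) ∂μ ≤ 1) :
    luxNorm μ A f ≤ ENNReal.ofReal c :=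
  sInf_le ⟨ENNReal.ofReal_pos.2 hc, ENNReal.ofReal_ne_top, by rwa [ENNReal.toReal_ofReal hc.le]⟩

lemma ofReal_le_luxNorm (hA : MonotoneOn A (Set.Ici 0)) (hc : 0 < c)
    (h : 1 < ∫⁻ x, ENNReal.ofReal (A (|f x| / c)) ∂μ) :
    ENNReal.ofReal c ≤ luxNorm μ A f := by
  refine le_sInf fun lam ⟨hlam0, hlam, hint⟩ => le_of_not_gt fun hlt => ?_
  have hlam_pos : 0 < lam.toReal := ENNReal.toReal_pos hlam0.ne' hlam
  have hlam_lt : lam.toReal < c := ENNReal.toReal_lt_of_lt_ofReal hlt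
  have hmono : ∫⁻ x, ENNReal.ofReal (A (|f x| / c)) ∂μ ≤
      ∫⁻ x, ENNReal.ofReal (A (|f x| / lam.toReal)) ∂μ :=
    lintegral_mono fun x => ENNReal.ofReal_le_ofReal <|
      hA (div_nonneg (abs_nonneg _) hc.le) (div_nonneg (abs_nonneg _) hlam_pos.le)
        (div_le_div_of_nonneg_left (abs_nonneg _) hlam_pos hlam_lt.le)
  exact (h.trans_le (hmono.trans hint)).false

end Luxemburg

lemma one_lt_e0 : 1 < e0 := by
  have := Real.exp_one_gt_d9
  unfold e0
  linarith

lemma log_e0_pos : 0 < Real.log e0 := Real.log_pos one_lt_e0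

lemma e0_add_pos {t : ℝ} (ht : 0 ≤ t) : 0 < e0 + t := by linarith [one_lt_e0]

lemma log_e0_add_nonneg {t : ℝ} (ht : 0 ≤ t) : 0 ≤ Real.log (e0 + t) :=
  Real.log_nonneg (by linarith [one_lt_e0])

lemma one_lt_log_e0_add {t : ℝ} (ht : 1 < t) : 1 < Real.log (e0 + t) := by
  rw [Real.lt_log_iff_exp_lt (e0_add_pos (by linarith)), e0]
  linarith

lemma log_e0_add_lt_one {t : ℝ} (ht₀ : 0 ≤ t) (ht : t < 1) : Real.log (e0 + t) < 1 := by
  rw [Real.log_lt_iff_lt_exp (e0_add_pos ht₀), e0]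
  linarith

lemma monotoneOn_Bpq {p q : ℝ} (hp : 0 ≤ p) (hq : 0 ≤ q) : MonotoneOn (Bpq p q) (Set.Ici 0) :=
  fun _ hs _ _ hst =>
    mul_le_mul (Real.rpow_le_rpow hs hst hp)
      (Real.rpow_le_rpow (log_e0_add_nonneg hs)
        (Real.log_le_log (e0_add_pos hs) (by linarith)) hq)
      (Real.rpow_nonneg (log_e0_add_nonneg hs) q) (Real.rpow_nonneg (le_trans hs hst) p)

lemma rpow_mul_log_e0_rpow_le_Bpq {p q s : ℝ} (hq : 0 ≤ q) (hs : 0 ≤ s) :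
    s ^ p * Real.log e0 ^ q ≤ Bpq p q s :=
  mul_le_mul_of_nonneg_left
    (Real.rpow_le_rpow log_e0_pos.le
      (Real.log_le_log (by linarith [one_lt_e0]) (by linarith)) hq)
    (Real.rpow_nonneg hs p)

lemma Bpq_le_log_e0_add_rpow_mul_rpow {p q s θ : ℝ} (hq : 0 ≤ q) (hs : 0 ≤ s) (hsθ : s ≤ θ) :
    Bpq p q s ≤ Real.log (e0 + θ) ^ q * s ^ p := by
  rw [Bpq, mul_comm]
  exact mul_le_mul_of_nonneg_right
    (Real.rpow_le_rpow (log_e0_add_nonneg hs)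
      (Real.log_le_log (e0_add_pos hs) (by linarith)) hq)
    (Real.rpow_nonneg hs p)

section Integrals

variable {X : Type*} [MeasurableSpace X] {μ : Measure X} {f : X → ℝ} {p c : ℝ}

lemma tendsto_lintegral_Bpq_of_ofReal_lt_eLpNormEssSup (hf : Measurable f) (hp : 0 ≤ p)
    (hc : 0 < c) (h : ENNReal.ofReal c < eLpNormEssSup f μ) :
    Tendsto (fun q => ∫⁻ x, ENNReal.ofReal (Bpq p q (|f x| / c)) ∂μ) atTop (𝓝 ∞) := by
  obtain ⟨γ, hγ, hcγ, hγf⟩ := ENNReal.lt_iff_exists_real_btwn.1 h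
  set S := {x | γ < |f x|}
  have hS : μ S ≠ 0 := by
    have := frequently_ae_iff.1 (frequently_lt_of_lt_limsup (by isBoundedDefault) hγf)
    simpa [Real.enorm_eq_ofReal_abs, ENNReal.ofReal_lt_ofReal_iff_of_nonneg hγ, S] using this
  have hcγ' : c < γ := (ENNReal.ofReal_lt_ofReal_iff'.1 hcγ).1
  set ρ := γ / c
  have hρ : 1 < ρ := (one_lt_div hc).2 hcγ'
  have hBρ : Tendsto (fun q => Bpq p q ρ) atTop atTop :=
    (tendsto_rpow_atTop_of_base_gt_one _ (one_lt_log_e0_add hρ)).const_mul_atTop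
      (Real.rpow_pos_of_pos (by linarith) p)
  have hlim : Tendsto (fun q => ENNReal.ofReal (Bpq p q ρ) * μ S) atTop (𝓝 ∞) := by
    have := ENNReal.Tendsto.mul_const (b := μ S) (tendsto_ofReal_atTop.comp hBρ)
      (.inl ENNReal.top_ne_zero)
    rwa [ENNReal.top_mul hS] at this
  refine tendsto_nhds_top_mono hlim ?_
  filter_upwards [eventually_ge_atTop 0] with q hq
  rw [← lintegral_indicator_const (measurableSet_lt measurable_const hf.abs)]
  refine lintegral_mono (Set.indicator_le fun x hx => ENNReal.ofReal_le_ofReal ?_)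
  exact monotoneOn_Bpq hp hq (Set.mem_Ici.2 (by linarith)) (Set.mem_Ici.2 (by positivity))
    (div_le_div_of_nonneg_right (le_of_lt hx) hc.le)

lemma tendsto_lintegral_Bpq_of_eLpNormEssSup_lt_ofReal
    (h : eLpNormEssSup f μ < ENNReal.ofReal c)
    (hfp : ∫⁻ x, ENNReal.ofReal ((|f x| / c) ^ p) ∂μ ≠ ∞) :
    Tendsto (fun q => ∫⁻ x, ENNReal.ofReal (Bpq p q (|f x| / c)) ∂μ) atTop (𝓝 0) := by
  have hc : 0 < c := ENNReal.ofReal_pos.1 (h.trans_le' zero_le)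
  set θ := (eLpNormEssSup f μ).toReal / c
  have hθ : θ < 1 := (div_lt_one hc).2 (ENNReal.toReal_lt_of_lt_ofReal h)
  have hθ₀ : 0 ≤ θ := by positivity
  have hf_le : ∀ᵐ x ∂μ, |f x| / c ≤ θ := by
    filter_upwards [ae_le_eLpNormEssSup (f := f) (μ := μ)] with x hx
    rw [Real.enorm_eq_ofReal_abs] at hx
    exact div_le_div_of_nonneg_right
      ((ENNReal.ofReal_le_iff_le_toReal (h.trans ofReal_lt_top).ne).1 hx) hc.le
  set L := Real.log (e0 + θ)
  have hL : Tendsto (fun q : ℝ => ENNReal.ofReal (L ^ q)) atTop (𝓝 0) := by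
    have := ENNReal.tendsto_ofReal <| _root_.tendsto_rpow_atTop_of_base_lt_one L
      (by linarith [log_e0_add_nonneg hθ₀]) (log_e0_add_lt_one hθ₀ hθ)
    rwa [ENNReal.ofReal_zero] at this
  have hbound := ENNReal.Tendsto.mul_const hL (.inr hfp)
  rw [zero_mul] at hbound
  refine tendsto_of_tendsto_of_tendsto_of_le_of_le' tendsto_const_nhds hbound
    (.of_forall fun _ => zero_le) ?_
  filter_upwards [eventually_ge_atTop 0] with q hq
  rw [← lintegral_const_mul' _ _ ENNReal.ofReal_ne_top]
  refine lintegral_mono_ae ?_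
  filter_upwards [hf_le] with x hx
  rw [← ENNReal.ofReal_mul (Real.rpow_nonneg (log_e0_add_nonneg hθ₀) q)]
  exact ENNReal.ofReal_le_ofReal (Bpq_le_log_e0_add_rpow_mul_rpow hq (by positivity) hx)

lemma lintegral_rpow_div_ne_top_of_luxNorm_lt_top {q₀ : ℝ} (hq₀ : 0 ≤ q₀)
    (hfin : luxNorm μ (Bpq p q₀) f < ∞) (hc : 0 < c) :
    ∫⁻ x, ENNReal.ofReal ((|f x| / c) ^ p) ∂μ ≠ ∞ := by
  obtain ⟨c₀, hc₀, hint⟩ := exists_lintegral_le_one_of_luxNorm_lt_top hfin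
  obtain ⟨K, hpt⟩ : ∃ K : ℝ, ∀ x, ENNReal.ofReal ((|f x| / c) ^ p) ≤
      ENNReal.ofReal K * ENNReal.ofReal (Bpq p q₀ (|f x| / c₀)) := by
    have hlog : 0 < Real.log e0 ^ q₀ := Real.rpow_pos_of_pos log_e0_pos q₀
    refine ⟨(c₀ / c) ^ p / Real.log e0 ^ q₀, fun x => ?_⟩
    have hu : 0 ≤ |f x| / c₀ := by positivity
    rw [← ENNReal.ofReal_mul (by positivity)]
    refine ENNReal.ofReal_le_ofReal ?_
    calc (|f x| / c) ^ p = (c₀ / c) ^ p * (|f x| / c₀) ^ p := by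
          rw [← Real.mul_rpow (by positivity) hu]
          field_simp
      _ ≤ (c₀ / c) ^ p * (Bpq p q₀ (|f x| / c₀) / Real.log e0 ^ q₀) := by
          gcongr
          exact (le_div_iff₀ hlog).2 (rpow_mul_log_e0_rpow_le_Bpq hq₀ hu)
      _ = (c₀ / c) ^ p / Real.log e0 ^ q₀ * Bpq p q₀ (|f x| / c₀) := by ring
  refine ne_top_of_le_ne_top (b := ENNReal.ofReal K * 1)
    (ENNReal.mul_ne_top ENNReal.ofReal_ne_top one_ne_top) ?_
  calc ∫⁻ x, ENNReal.ofReal ((|f x| / c) ^ p) ∂μ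
      ≤ ∫⁻ x, ENNReal.ofReal K * ENNReal.ofReal (Bpq p q₀ (|f x| / c₀)) ∂μ := lintegral_mono hpt
    _ = ENNReal.ofReal K * ∫⁻ x, ENNReal.ofReal (Bpq p q₀ (|f x| / c₀)) ∂μ :=
        lintegral_const_mul' _ _ ENNReal.ofReal_ne_top
    _ ≤ ENNReal.ofReal K * 1 := mul_le_mul_right hint _

end Integrals

theorem stmt0 {X : Type*} [MeasurableSpace X] (μ : Measure X) (f : X → ℝ)
    (hf : Measurable f) (p q₀ : ℝ) (hp : 1 ≤ p) (hq₀ : 0 < q₀)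
    (hfin : luxNorm μ (Bpq p q₀) f < ∞) :
    Tendsto (fun q : ℝ => luxNorm μ (Bpq p q) f) atTop (𝓝 (eLpNormEssSup f μ)) := by
  have hp₀ : 0 ≤ p := by linarith
  refine tendsto_order.2 ⟨fun a ha => ?_, fun b hb => ?_⟩
  · obtain ⟨c, -, hac, hcf⟩ := ENNReal.lt_iff_exists_real_btwn.1 ha
    have hc : 0 < c := ENNReal.ofReal_pos.1 (hac.trans_le' zero_le)
    filter_upwards [(tendsto_lintegral_Bpq_of_ofReal_lt_eLpNormEssSup hf hp₀ hc hcf).eventually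
      (lt_mem_nhds one_lt_top), eventually_ge_atTop 0] with q hq hq_nonneg
    exact hac.trans_le (ofReal_le_luxNorm (monotoneOn_Bpq hp₀ hq_nonneg) hc hq)
  · obtain ⟨c, -, hfc, hcb⟩ := ENNReal.lt_iff_exists_real_btwn.1 hb
    have hc : 0 < c := ENNReal.ofReal_pos.1 (hfc.trans_le' zero_le)
    have hfp := lintegral_rpow_div_ne_top_of_luxNorm_lt_top hq₀.le hfin hc
    filter_upwards [(tendsto_lintegral_Bpq_of_eLpNormEssSup_lt_ofReal hfc hfp).eventually
      (gt_mem_nhds one_pos)] with q hq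
    exact (luxNorm_le_ofReal hc hq.le).trans_lt hcb
end

section
/- If f is essentially unbounded (‖f‖_∞ = ∞) and ‖f‖_{B_{p,q₀}} < ∞ for some p ≥ 1, q₀ > 0, then liminf_{q→∞} ‖f‖_{B_{p,q}} = ∞. -/
/- Since `f` is essentially unbounded, for every `n` the set `S = {2(n+1) ≤ |f|}` has positive
measure. If `λ ≤ n + 1` then `|f|/λ ≥ 2` on `S`, where `B_{p,q} ≥ log(e₀ + 2)^q = log(e + 1)^q`;
as `log(e + 1) > 1` this exceeds `1 / μ S` for all large `q`, so `λ` is not admissible and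
`‖f‖_{B_{p,q}} ≥ n + 1` eventually in `q`. -/

open MeasureTheory Filter Real Topology ENNReal

theorem measure_le_abs_ne_zero_of_eLpNormEssSup_eq_top {X : Type*} [MeasurableSpace X]
    {μ : Measure X} {f : X → ℝ} (hunb : eLpNormEssSup f μ = ∞) (a : ℝ) :
    μ {x | a ≤ |f x|} ≠ 0 := by
  intro h0
  have hbound : ∀ᵐ x ∂μ, ‖f x‖ ≤ a := by
    filter_upwards [measure_eq_zero_iff_ae_notMem.mp h0] with x hx
    simpa using (not_le.mp hx).le
  exact (eLpNormEssSup_lt_top_of_ae_bound hbound).ne hunb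

theorem ofReal_div_le_luxNorm {X : Type*} [MeasurableSpace X] {μ : Measure X} {A : ℝ → ℝ}
    {f : X → ℝ} (hf : Measurable f) {a r K : ℝ} (hr : 0 < r)
    (hA : ∀ t, r ≤ t → K ≤ A t) (hK : 1 < ENNReal.ofReal K * μ {x | a ≤ |f x|}) :
    ENNReal.ofReal (a / r) ≤ luxNorm μ A f := by
  refine le_sInf ?_
  rintro lam ⟨hlam0, hlamtop, hint⟩
  by_contra! hlt
  set S := {x | a ≤ |f x|}
  have hlamR : lam.toReal < a / r := (ENNReal.lt_ofReal_iff_toReal_lt hlamtop).mp hlt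
  have hlamR0 : 0 < lam.toReal := ENNReal.toReal_pos hlam0.ne' hlamtop
  have hA_on_S : ∀ x ∈ S, ENNReal.ofReal K ≤ ENNReal.ofReal (A (|f x| / lam.toReal)) := by
    intro x hx
    refine ENNReal.ofReal_le_ofReal (hA _ ?_)
    rw [le_div_iff₀ hlamR0]
    calc r * lam.toReal ≤ a := by rw [lt_div_iff₀ hr] at hlamR; linarith
      _ ≤ |f x| := hx
  have hS : MeasurableSet S := measurableSet_le measurable_const hf.abs
  refine hK.not_ge ?_
  calc ENNReal.ofReal K * μ S = ∫⁻ _ in S, ENNReal.ofReal K ∂μ := (setLIntegral_const S _).symm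
    _ ≤ ∫⁻ x in S, ENNReal.ofReal (A (|f x| / lam.toReal)) ∂μ := setLIntegral_mono' hS hA_on_S
    _ ≤ ∫⁻ x, ENNReal.ofReal (A (|f x| / lam.toReal)) ∂μ := setLIntegral_le_lintegral S _
    _ ≤ 1 := hint

theorem one_lt_e0_add {s : ℝ} (hs : 0 ≤ s) : 1 < e0 + s := by
  have := Real.exp_one_gt_d9
  unfold e0
  linarith

theorem log_e0_add_pow_le_Bpq {p q s t : ℝ} (hp : 0 ≤ p) (hq : 0 ≤ q) (hs : 1 ≤ s)
    (hst : s ≤ t) : Real.log (e0 + s) ^ q ≤ Bpq p q t := by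
  have hlog_pos : 0 < Real.log (e0 + s) := Real.log_pos (one_lt_e0_add (by linarith))
  have hlog_mono : Real.log (e0 + s) ≤ Real.log (e0 + t) :=
    Real.log_le_log (by linarith [one_lt_e0_add (by linarith : (0 : ℝ) ≤ s)]) (by linarith)
  calc Real.log (e0 + s) ^ q ≤ 1 * Real.log (e0 + t) ^ q := by
        rw [one_mul]; exact Real.rpow_le_rpow hlog_pos.le hlog_mono hq
    _ ≤ t ^ p * Real.log (e0 + t) ^ q :=
        mul_le_mul_of_nonneg_right (Real.one_le_rpow (by linarith) hp)
          (Real.rpow_nonneg (hlog_pos.le.trans hlog_mono) q)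

theorem one_lt_log_e0_add_two : 1 < Real.log (e0 + 2) := by
  rw [Real.lt_log_iff_exp_lt (by linarith [one_lt_e0_add (le_refl 0)])]
  unfold e0
  linarith

theorem stmt14_general {X : Type*} [MeasurableSpace X] (μ : Measure X) (f : X → ℝ)
    (hf : Measurable f) (p : ℝ) (hp : 1 ≤ p)
    (hunb : eLpNormEssSup f μ = ∞) :
    Filter.liminf (fun q : ℝ => luxNorm μ (Bpq p q) f) atTop = ∞ := by
  refine Tendsto.liminf_eq (ENNReal.tendsto_nhds_top fun n => ?_)
  set a : ℝ := 2 * ((n : ℝ) + 1)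
  have hS := measure_le_abs_ne_zero_of_eLpNormEssSup_eq_top hunb a
  have hK : Tendsto (fun q : ℝ => ENNReal.ofReal (Real.log (e0 + 2) ^ q) * μ {x | a ≤ |f x|})
      atTop (𝓝 ∞) := by
    have := ENNReal.Tendsto.mul_const (b := μ {x | a ≤ |f x|}) (ENNReal.tendsto_ofReal_atTop.comp
      (tendsto_rpow_atTop_of_base_gt_one _ one_lt_log_e0_add_two)) (Or.inl top_ne_zero)
    rwa [ENNReal.top_mul hS] at this
  filter_upwards [eventually_ge_atTop 0, hK.eventually (lt_mem_nhds one_lt_top)] with q hq hq_large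
  calc (n : ℝ≥0∞) < ENNReal.ofReal (a / 2) := by
        rw [← ENNReal.ofReal_natCast, ENNReal.ofReal_lt_ofReal_iff (by positivity)]
        linarith
    _ ≤ luxNorm μ (Bpq p q) f :=
        ofReal_div_le_luxNorm hf two_pos
          (fun t ht => log_e0_add_pow_le_Bpq (by linarith) hq one_le_two ht) hq_large

theorem stmt14 {X : Type*} [MeasurableSpace X] (μ : Measure X) (f : X → ℝ)
    (hf : Measurable f) (p q₀ : ℝ) (hp : 1 ≤ p) (hq₀ : 0 < q₀)
    (hunb : eLpNormEssSup f μ = ∞) (hfin : luxNorm μ (Bpq p q₀) f < ∞) :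
    Filter.liminf (fun q : ℝ => luxNorm μ (Bpq p q) f) atTop = ∞ :=
  stmt14_general μ f hf p hp hunb
end
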